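/- Let a root triangle with assigned root type τ ∈ {0,1} be uniformly refined to level L ≥ 1. Let a contiguous TM segment of level-L subtriangles consist of all level-L descendants of one or more consecutive (in the child order) level-1 children of the root, together with exactly one additional level-L subtriangle that immediately precedes or immediately follows this union in the TM order. Then this segment has at most two face-connected components. -/

import Mathlib

/-- Points of the plane. -/
abbrev TMV : Type := Fin 2 → ℝ

/-- Midpoint of two points of the plane. -/
noncomputable def tmMid (a b : TMV) : TMV := (1 / 2 : ℝ) • (a + b)

/-- Bey's refinement: the four children of a triangle `[x 0, x 1, x 2]`. -/
noncomputable def beyChild (x : Fin 3 → TMV) : Fin 4 → Fin 3 → TMV :=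
  ![![x 0, tmMid (x 0) (x 1), tmMid (x 0) (x 2)],
    ![tmMid (x 0) (x 1), x 1, tmMid (x 1) (x 2)],
    ![tmMid (x 0) (x 2), tmMid (x 1) (x 2), x 2],
    ![tmMid (x 0) (x 1), tmMid (x 0) (x 2), tmMid (x 1) (x 2)]]

/-- The vertices of the subtriangle of the root `x` reached by the successive
child choices recorded in the list `p`. -/
noncomputable def tmVerts (x : Fin 3 → TMV) : List (Fin 4) → Fin 3 → TMV
  | [] => x
  | i :: p => tmVerts (beyChild x i) p

/-- The type of the subtriangle reached by path `p` from a root of type `τ`: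
children `T_0, T_1, T_2` inherit the parent's type, `T_3` has the opposite type. -/
def tmType (τ : Fin 2) : List (Fin 4) → Fin 2
  | [] => τ
  | i :: p => tmType (if i = 3 then 1 - τ else τ) p

/-- The position of Bey child `i` in the TM traversal order of the children of a
parent of type `b`: order `T_0, T_1, T_3, T_2` for type 0 and `T_0, T_3, T_1, T_2`
for type 1. -/
def tmChildRank (b : Fin 2) : Fin 4 → Fin 4 :=
  if b = 0 then ![0, 1, 3, 2] else ![0, 2, 3, 1]

/-- The TM index of the level-`p.length` subtriangle given by path `p` from a root
of type `τ`, among all subtriangles of that level. -/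
def tmIndex (τ : Fin 2) : List (Fin 4) → ℕ
  | [] => 0
  | i :: p => (tmChildRank τ i : ℕ) * 4 ^ p.length + tmIndex (if i = 3 then 1 - τ else τ) p

/-- The closed triangle spanned by the three vertices. -/
def triSet (x : Fin 3 → TMV) : Set TMV := convexHull ℝ {x 0, x 1, x 2}

/-- `e` is a complete edge of the triangle with vertices `x`. -/
def triIsEdge (x : Fin 3 → TMV) (e : Set TMV) : Prop :=
  ∃ i j : Fin 3, i ≠ j ∧ e = segment ℝ (x i) (x j)

/-- Two triangles are face-neighbors if their intersection is a complete edge of both. -/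
def triFaceNbr (x y : Fin 3 → TMV) : Prop :=
  ∃ e, triIsEdge x e ∧ triIsEdge y e ∧ triSet x ∩ triSet y = e

/-- A set `S` of subtriangle paths (with root vertices `x0`) is face-connected. -/
def triFaceConnected (x0 : Fin 3 → TMV) (S : Set (List (Fin 4))) : Prop :=
  ∀ p ∈ S, ∀ q ∈ S,
    Relation.ReflTransGen
      (fun a b => a ∈ S ∧ b ∈ S ∧ triFaceNbr (tmVerts x0 a) (tmVerts x0 b)) p q

/-- `S` has at most `n` face-connected components. -/
def triCompBound (x0 : Fin 3 → TMV) (S : Set (List (Fin 4))) (n : ℕ) : Prop :=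
  ∃ f : Fin n → Set (List (Fin 4)), S = ⋃ i, f i ∧ ∀ i, triFaceConnected x0 (f i)

/-- `S` is a contiguous segment of the TM curve through the uniform level-`L`
refinement of a root of type `τ`: a set of level-`L` paths forming an interval
in the TM order. -/
def tmSegment (τ : Fin 2) (L : ℕ) (S : Set (List (Fin 4))) : Prop :=
  (∀ p ∈ S, p.length = L) ∧
  ∀ p q r : List (Fin 4), p.length = L → q.length = L → r.length = L →
    p ∈ S → r ∈ S → tmIndex τ p ≤ tmIndex τ q → tmIndex τ q ≤ tmIndex τ r → q ∈ S

/-!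
Subtriangles sharing an edge are face-neighbors because an affine function vanishing on the edge
separates their third vertices. In a Bey refinement each corner child `T_v` is a face-neighbor of
the middle child `T_3`, and so are their level-`k` corner descendants at a common vertex, being the
images of `T_v` and `T_3` under one homothety. By induction on the level, the descendants of any
child are face-connected, and so are the descendants of several children once `T_3` is among them.
The only unions of at least two consecutive children avoiding `T_3` are `T_0, T_1` (type 0) and
`T_1, T_2` (type 1); there the extra triangle is the first, resp. last, descendant of `T_3`, which
is attached to a corner descendant of `T_1`.
-/

open AffineMap Set

theorem mem_segment_of_mem_convexHull_of_map_eq_zero {E : Type*} [AddCommGroup E] [Module ℝ E]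
    {A B C p : E} (f : E →ᵃ[ℝ] ℝ) (hA : f A = 0) (hB : f B = 0) (hC : f C ≠ 0)
    (hp : p ∈ convexHull ℝ {A, B, C}) (hfp : f p = 0) : p ∈ segment ℝ A B := by
  rw [pair_comm, insert_comm, convexHull_insert (insert_nonempty _ _),
    convexHull_pair, mem_convexJoin] at hp
  obtain ⟨_, rfl, z, hz, s, t, hs, ht, hst, rfl⟩ := hp
  have hfz : f z = 0 := by
    obtain ⟨a, b, -, -, hab, rfl⟩ := hz
    rw [Convex.combo_affine_apply hab, hA, hB, smul_zero, smul_zero, add_zero]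
  rw [Convex.combo_affine_apply hst, hfz, smul_zero, add_zero, smul_eq_mul] at hfp
  obtain rfl : s = 0 := (mul_eq_zero.1 hfp).resolve_right hC
  rwa [zero_smul, zero_add, show t = 1 by linarith, one_smul]

theorem convexHull_inter_convexHull_eq_segment {E : Type*} [AddCommGroup E] [Module ℝ E]
    {A B C D : E} (f : E →ᵃ[ℝ] ℝ) (hA : f A = 0) (hB : f B = 0) (hC : f C < 0)
    (hD : 0 < f D) :
    convexHull ℝ {A, B, C} ∩ convexHull ℝ {A, B, D} = segment ℝ A B := by
  refine Subset.antisymm (fun p ⟨hpC, hpD⟩ => ?_) (subset_inter ?_ ?_)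
  · have hle : f p ≤ 0 := convexHull_min (s := {A, B, C}) (t := f ⁻¹' Iic 0)
      (by rintro _ (rfl | rfl | rfl) <;> simp [hA, hB, hC.le])
      ((convex_Iic 0).affine_preimage f) hpC
    have hge : 0 ≤ f p := convexHull_min (s := {A, B, D}) (t := f ⁻¹' Ici 0)
      (by rintro _ (rfl | rfl | rfl) <;> simp [hA, hB, hD.le])
      ((convex_Ici 0).affine_preimage f) hpD
    exact mem_segment_of_mem_convexHull_of_map_eq_zero f hA hB hC.ne hpC (le_antisymm hle hge)
  all_goals exact segment_subset_convexHull (by simp) (by simp)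

theorem tmMid_eq_midpoint (a b : TMV) : tmMid a b = midpoint ℝ a b := by
  rw [tmMid, midpoint_eq_smul_add, invOf_eq_inv, one_div]

theorem beyChild_castSucc (y : Fin 3 → TMV) (v : Fin 3) :
    beyChild y v.castSucc = homothety (y v) (2⁻¹ : ℝ) ∘ y := by
  funext j
  fin_cases v <;> fin_cases j <;> simp [beyChild, tmMid, homothety_apply] <;> module

theorem beyChild_three (y : Fin 3 → TMV) :
    beyChild y 3 =
      homothety ((3⁻¹ : ℝ) • (y 0 + y 1 + y 2)) (-2⁻¹ : ℝ) ∘ y ∘ Fin.rev := by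
  funext j
  fin_cases j <;> simp [beyChild, tmMid, homothety_apply, Fin.rev] <;> module

theorem AffineIndependent.beyChild {y : Fin 3 → TMV} (hy : AffineIndependent ℝ y) (i : Fin 4) :
    AffineIndependent ℝ (beyChild y i) := by
  induction i using Fin.lastCases with
  | cast v => exact beyChild_castSucc y v ▸ hy.map' _ (homothety_injective _ (by norm_num))
  | last =>
    exact beyChild_three y ▸ (hy.comp_embedding Fin.revPerm.toEmbedding).map' _
      (homothety_injective _ (by norm_num))

theorem triSet_comp (φ : TMV →ᵃ[ℝ] TMV) (x : Fin 3 → TMV) :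
    triSet (φ ∘ x) = φ '' triSet x := by
  simp only [triSet, φ.image_convexHull, image_insert_eq, image_singleton, Function.comp_apply]

theorem triFaceNbr.symm {x y : Fin 3 → TMV} (h : triFaceNbr x y) : triFaceNbr y x :=
  let ⟨e, hx, hy, hxy⟩ := h
  ⟨e, hy, hx, inter_comm (triSet x) _ ▸ hxy⟩

theorem triFaceNbr.comp {x y : Fin 3 → TMV} (h : triFaceNbr x y) {φ : TMV →ᵃ[ℝ] TMV}
    (hφ : Function.Injective φ) : triFaceNbr (φ ∘ x) (φ ∘ y) := by
  obtain ⟨_, ⟨i, j, hij, rfl⟩, ⟨i', j', hij', he⟩, hxy⟩ := h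
  refine ⟨segment ℝ (φ (x i)) (φ (x j)), ⟨i, j, hij, rfl⟩, ⟨i', j', hij', ?_⟩, ?_⟩
  · rw [← image_segment, he, image_segment]; rfl
  · rw [triSet_comp, triSet_comp, ← image_inter hφ, hxy, image_segment]

theorem tmVerts_replicate (y : Fin 3 → TMV) (v : Fin 3) (k : ℕ) :
    tmVerts y (List.replicate k v.castSucc) = homothety (y v) ((2⁻¹ : ℝ) ^ k) ∘ y := by
  induction k generalizing y with
  | zero => simp [tmVerts]
  | succ k ih =>
    rw [List.replicate_succ, tmVerts, ih, beyChild_castSucc, Function.comp_apply,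
      homothety_apply_same, pow_succ, homothety_mul, coe_comp, Function.comp_assoc]

theorem exists_affineMap_eq_indicator {y : Fin 3 → TMV} (hy : AffineIndependent ℝ y)
    (v : Fin 3) :
    ∃ f : TMV →ᵃ[ℝ] ℝ, ∀ j, f (y j) = if j = v then 1 else 0 := by
  have htot : affineSpan ℝ (range y) = ⊤ :=
    hy.affineSpan_eq_top_iff_card_eq_finrank_add_one.2 (by simp)
  let b : AffineBasis (Fin 3) ℝ TMV := ⟨y, hy, htot⟩
  refine ⟨b.coord v, fun j => ?_⟩
  split_ifs with h
  · subst h; exact b.coord_apply_eq j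
  · exact b.coord_apply_ne (Ne.symm h)

theorem triFaceNbr_of_separating {X Y : Fin 3 → TMV} {i j i' j' : Fin 3} (hij : i ≠ j)
    (hij' : i' ≠ j') (hi : Y i' = X i) (hj : Y j' = X j) {C D : TMV}
    (hX : ({X 0, X 1, X 2} : Set TMV) = {X i, X j, C})
    (hY : ({Y 0, Y 1, Y 2} : Set TMV) = {X i, X j, D}) (f : TMV →ᵃ[ℝ] ℝ)
    (hfi : f (X i) = 0) (hfj : f (X j) = 0) (hC : f C < 0) (hD : 0 < f D) : triFaceNbr X Y := by
  refine ⟨segment ℝ (X i) (X j), ⟨i, j, hij, rfl⟩, ⟨i', j', hij', by rw [hi, hj]⟩, ?_⟩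
  rw [triSet, triSet, hX, hY]
  exact convexHull_inter_convexHull_eq_segment f hfi hfj hC hD

theorem map_tmMid (f : TMV →ᵃ[ℝ] ℝ) (a b : TMV) : f (tmMid a b) = (f a + f b) / 2 := by
  rw [tmMid_eq_midpoint, map_midpoint, midpoint_eq_smul_add, smul_eq_mul, invOf_eq_inv]
  ring

/-- The separating function is the barycentric coordinate of `y v` shifted by `1/2`. -/
theorem triFaceNbr_beyChild_three {y : Fin 3 → TMV} (hy : AffineIndependent ℝ y) (v : Fin 3) :
    triFaceNbr (beyChild y v.castSucc) (beyChild y 3) := by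
  obtain ⟨f, hf⟩ := exists_affineMap_eq_indicator hy v
  set g : TMV →ᵃ[ℝ] ℝ := const ℝ TMV 2⁻¹ - f
  have hg : ∀ j, g (y j) = 2⁻¹ - if j = v then 1 else 0 := fun j => by simp [g, hf]
  fin_cases v
  · refine triFaceNbr_of_separating (i := 1) (j := 2) (i' := 0) (j' := 1) (C := y 0)
      (D := tmMid (y 1) (y 2)) (by decide) (by decide) rfl rfl ?_ rfl g ?_ ?_ ?_ ?_
    · ext; simp [beyChild, or_comm, or_left_comm]
    all_goals norm_num [beyChild, map_tmMid, hg, Fin.ext_iff, Matrix.cons_val_two]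
  · refine triFaceNbr_of_separating (i := 0) (j := 2) (i' := 0) (j' := 2) (C := y 1)
      (D := tmMid (y 0) (y 2)) (by decide) (by decide) rfl rfl ?_ ?_ g ?_ ?_ ?_ ?_
    · ext; simp [beyChild, or_comm, or_left_comm]
    · ext; simp [beyChild, or_comm]
    all_goals norm_num [beyChild, map_tmMid, hg, Fin.ext_iff, Matrix.cons_val_two]
  · refine triFaceNbr_of_separating (i := 0) (j := 1) (i' := 1) (j' := 2) (C := y 2)
      (D := tmMid (y 0) (y 1)) (by decide) (by decide) rfl rfl rfl ?_ g ?_ ?_ ?_ ?_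
    · ext; simp [beyChild, or_comm, or_left_comm]
    all_goals norm_num [beyChild, map_tmMid, hg, Fin.ext_iff, Matrix.cons_val_two]

theorem triFaceNbr_tmVerts_corner {y : Fin 3 → TMV} (hy : AffineIndependent ℝ y)
    {v w w' : Fin 3}
    (h : beyChild y v.castSucc w = beyChild y 3 w') (k : ℕ) :
    triFaceNbr (tmVerts y (v.castSucc :: List.replicate k w.castSucc))
      (tmVerts y (3 :: List.replicate k w'.castSucc)) := by
  rw [tmVerts, tmVerts, tmVerts_replicate, tmVerts_replicate, h]
  exact (triFaceNbr_beyChild_three hy v).comp (homothety_injective _ (by positivity))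

def FaceAdjIn (x0 : Fin 3 → TMV) (S : Set (List (Fin 4))) (a b : List (Fin 4)) : Prop :=
  a ∈ S ∧ b ∈ S ∧ triFaceNbr (tmVerts x0 a) (tmVerts x0 b)

instance (x0 : Fin 3 → TMV) (S : Set (List (Fin 4))) : Std.Symm (FaceAdjIn x0 S) :=
  ⟨fun _ _ ⟨ha, hb, h⟩ => ⟨hb, ha, h.symm⟩⟩

theorem FaceAdjIn.reflTransGen_mono {x0 : Fin 3 → TMV} {S T : Set (List (Fin 4))} (hST : S ⊆ T)
    {a b : List (Fin 4)} (h : Relation.ReflTransGen (FaceAdjIn x0 S) a b) :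
    Relation.ReflTransGen (FaceAdjIn x0 T) a b :=
  Relation.ReflTransGen.mono (fun _ _ ⟨ha, hb, hab⟩ => ⟨hST ha, hST hb, hab⟩) _ _ h

theorem triFaceConnected_singleton (x0 : Fin 3 → TMV) (e : List (Fin 4)) :
    triFaceConnected x0 {e} := by
  rintro _ rfl _ rfl
  exact .refl

theorem triFaceConnected_image_cons {x0 : Fin 3 → TMV} {i : Fin 4} {S : Set (List (Fin 4))}
    (h : triFaceConnected (beyChild x0 i) S) : triFaceConnected x0 (List.cons i '' S) := by
  rintro _ ⟨a, ha, rfl⟩ _ ⟨b, hb, rfl⟩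
  exact (h a ha b hb).lift _ fun _ _ ⟨ha, hb, hab⟩ =>
    ⟨mem_image_of_mem _ ha, mem_image_of_mem _ hb, hab⟩

theorem triFaceConnected_of_forall_reflTransGen {x0 : Fin 3 → TMV} {S : Set (List (Fin 4))}
    {c : List (Fin 4)} (h : ∀ p ∈ S, Relation.ReflTransGen (FaceAdjIn x0 S) p c) :
    triFaceConnected x0 S :=
  fun p hp q hq => (h p hp).trans (Std.Symm.symm _ _ (h q hq))

theorem triFaceConnected_union {x0 : Fin 3 → TMV} {S T : Set (List (Fin 4))}
    (hS : triFaceConnected x0 S) (hT : triFaceConnected x0 T) {s t : List (Fin 4)} (hs : s ∈ S)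
    (ht : t ∈ T) (hst : triFaceNbr (tmVerts x0 s) (tmVerts x0 t)) :
    triFaceConnected x0 (S ∪ T) := by
  refine triFaceConnected_of_forall_reflTransGen (c := t) fun p hp => hp.elim (fun hp => ?_)
    fun hp => FaceAdjIn.reflTransGen_mono subset_union_right (hT p hp t ht)
  exact (FaceAdjIn.reflTransGen_mono subset_union_left (hS p hp s hs)).tail
    ⟨mem_union_left _ hs, mem_union_right _ ht, hst⟩

theorem triFaceConnected_biUnion {x0 : Fin 3 → TMV} {ι : Type*} {I : Set ι}
    {A : ι → Set (List (Fin 4))} {j : ι} (hj : j ∈ I) {c : List (Fin 4)} (hc : c ∈ A j)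
    (h : ∀ i ∈ I, triFaceConnected x0 (A i ∪ A j)) :
    triFaceConnected x0 (⋃ i ∈ I, A i) := by
  have hsub : ∀ i ∈ I, A i ∪ A j ⊆ ⋃ i ∈ I, A i := fun i hi =>
    union_subset (subset_biUnion_of_mem hi) (subset_biUnion_of_mem hj)
  refine triFaceConnected_of_forall_reflTransGen (c := c) fun p hp => ?_
  obtain ⟨i, hi, hpi⟩ := mem_iUnion₂.1 hp
  exact FaceAdjIn.reflTransGen_mono (hsub i hi) (h i hi p (.inl hpi) c (.inr hc))

theorem triFaceConnected_biUnion_of_subsingleton {x0 : Fin 3 → TMV} {ι : Type*} {I : Set ι}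
    {A : ι → Set (List (Fin 4))} (hI : I.Subsingleton) (h : ∀ i, triFaceConnected x0 (A i)) :
    triFaceConnected x0 (⋃ i ∈ I, A i) := by
  obtain rfl | ⟨i, rfl⟩ := hI.eq_empty_or_singleton
  · simp [triFaceConnected]
  · simpa using h i

theorem triCompBound_union {x0 : Fin 3 → TMV} {S T : Set (List (Fin 4))}
    (hS : triFaceConnected x0 S) (hT : triFaceConnected x0 T) : triCompBound x0 (S ∪ T) 2 :=
  ⟨![S, T], by ext; simp [Fin.exists_fin_two], Fin.forall_fin_two.2 ⟨hS, hT⟩⟩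

def childDescendants (i : Fin 4) (k : ℕ) : Set (List (Fin 4)) :=
  {p | p.length = k + 1 ∧ p.head? = some i}

theorem childDescendants_eq_image (i : Fin 4) (k : ℕ) :
    childDescendants i k = List.cons i '' {q | q.length = k} := by
  ext (_ | ⟨j, q⟩) <;> simp [childDescendants, eq_comm]

theorem setOf_length_succ_eq_biUnion (k : ℕ) :
    {p : List (Fin 4) | p.length = k + 1} =
      ⋃ i ∈ (univ : Set (Fin 4)), childDescendants i k := by
  ext (_ | ⟨j, q⟩) <;> simp [childDescendants]

theorem setOf_head_eq_biUnion (k : ℕ) (P : Fin 4 → Prop) :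
    {p : List (Fin 4) | p.length = k + 1 ∧ ∃ i, p.head? = some i ∧ P i} =
      ⋃ i ∈ {i | P i}, childDescendants i k := by
  ext p; simp only [mem_ofPred_eq, childDescendants, mem_iUnion, exists_prop]; grind

theorem triFaceConnected_childDescendants_union_three {y : Fin 3 → TMV}
    (hy : AffineIndependent ℝ y) {k : ℕ} (hD : ∀ i, triFaceConnected y (childDescendants i k))
    (i : Fin 4) : triFaceConnected y (childDescendants i k ∪ childDescendants 3 k) := by
  fin_cases i
  · exact triFaceConnected_union (hD 0) (hD 3) ⟨by simp, rfl⟩ ⟨by simp, rfl⟩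
      (triFaceNbr_tmVerts_corner hy (v := 0) (w := 1) (w' := 0) rfl k)
  · exact triFaceConnected_union (hD 1) (hD 3) ⟨by simp, rfl⟩ ⟨by simp, rfl⟩
      (triFaceNbr_tmVerts_corner hy (v := 1) (w := 0) (w' := 0) rfl k)
  · exact triFaceConnected_union (hD 2) (hD 3) ⟨by simp, rfl⟩ ⟨by simp, rfl⟩
      (triFaceNbr_tmVerts_corner hy (v := 2) (w := 1) (w' := 2) rfl k)
  · exact (union_self _).symm ▸ hD 3

theorem triFaceConnected_biUnion_childDescendants {y : Fin 3 → TMV} (hy : AffineIndependent ℝ y)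
    {k : ℕ} (hD : ∀ i, triFaceConnected y (childDescendants i k)) {I : Set (Fin 4)}
    (h3 : 3 ∈ I) :
    triFaceConnected y (⋃ i ∈ I, childDescendants i k) :=
  triFaceConnected_biUnion h3 (c := 3 :: List.replicate k 0) ⟨by simp, rfl⟩
    fun i _ => triFaceConnected_childDescendants_union_three hy hD i

theorem triFaceConnected_setOf_length {y : Fin 3 → TMV} (hy : AffineIndependent ℝ y) (k : ℕ) :
    triFaceConnected y {p | p.length = k} := by
  induction k generalizing y with
  | zero =>
    rintro p hp q hq
    rw [mem_ofPred_eq, List.length_eq_zero_iff] at hp hq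
    rw [hp, hq]
  | succ k ih =>
    rw [setOf_length_succ_eq_biUnion]
    refine triFaceConnected_biUnion_childDescendants hy (fun i => ?_) (mem_univ 3)
    rw [childDescendants_eq_image]
    exact triFaceConnected_image_cons (ih (hy.beyChild i))

theorem triFaceConnected_childDescendants {y : Fin 3 → TMV} (hy : AffineIndependent ℝ y)
    (i : Fin 4) (k : ℕ) : triFaceConnected y (childDescendants i k) := by
  rw [childDescendants_eq_image]
  exact triFaceConnected_image_cons (triFaceConnected_setOf_length (hy.beyChild i) k)

theorem tmChildRank_injective (τ : Fin 2) : Function.Injective (tmChildRank τ) := by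
  fin_cases τ <;> decide

theorem tmIndex_cons (τ : Fin 2) (i : Fin 4) (q : List (Fin 4)) :
    tmIndex τ (i :: q) =
      tmChildRank τ i * 4 ^ q.length + tmIndex (if i = 3 then 1 - τ else τ) q := rfl

theorem tmIndex_lt (τ : Fin 2) (p : List (Fin 4)) : tmIndex τ p < 4 ^ p.length := by
  induction p generalizing τ with
  | nil => simp [tmIndex]
  | cons i q ih =>
    have hi : (tmChildRank τ i : ℕ) * 4 ^ q.length ≤ 3 * 4 ^ q.length :=
      Nat.mul_le_mul_right _ (Fin.is_le _)
    rw [tmIndex_cons, List.length_cons, pow_succ]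
    linarith [ih (if i = 3 then 1 - τ else τ)]

theorem tmChildRank_eq_and_tmIndex_eq {τ : Fin 2} {i : Fin 4} {q : List (Fin 4)} {r t : ℕ}
    (ht : t < 4 ^ q.length) (h : tmIndex τ (i :: q) = r * 4 ^ q.length + t) :
    tmChildRank τ i = r ∧ tmIndex (if i = 3 then 1 - τ else τ) q = t := by
  have hpos : 0 < 4 ^ q.length := by positivity
  rw [tmIndex_cons] at h
  have h₁ := (Nat.div_mod_unique (a := r * 4 ^ q.length + t) (d := r) hpos).2 ⟨by ring, ht⟩
  have h₂ := (Nat.div_mod_unique (a := r * 4 ^ q.length + t) (d := tmChildRank τ i) hpos).2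
    ⟨by rw [← h]; ring, tmIndex_lt (if i = 3 then 1 - τ else τ) q⟩
  exact ⟨h₂.1.symm.trans h₁.1, h₂.2.symm.trans h₁.2⟩

theorem eq_replicate_zero_of_tmIndex_eq_zero {τ : Fin 2} {p : List (Fin 4)}
    (h : tmIndex τ p = 0) : p = List.replicate p.length 0 := by
  induction p generalizing τ with
  | nil => rfl
  | cons i q ih =>
    obtain ⟨hi, hq⟩ :=
      tmChildRank_eq_and_tmIndex_eq (r := 0) (by positivity) (h.trans (by ring))
    obtain rfl : i = 0 := tmChildRank_injective τ (Fin.ext (hi.trans (by fin_cases τ <;> rfl)))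
    rw [List.length_cons, List.replicate_succ, ← ih hq]

theorem eq_replicate_two_of_tmIndex_add_one_eq {τ : Fin 2} {p : List (Fin 4)}
    (h : tmIndex τ p + 1 = 4 ^ p.length) : p = List.replicate p.length 2 := by
  induction p generalizing τ with
  | nil => rfl
  | cons i q ih =>
    have hpos : 0 < 4 ^ q.length := by positivity
    rw [List.length_cons, pow_succ] at h
    obtain ⟨hi, hq⟩ := tmChildRank_eq_and_tmIndex_eq (τ := τ) (i := i) (q := q) (r := 3)
      (t := 4 ^ q.length - 1) (by omega) (by omega)
    obtain rfl : i = 2 := tmChildRank_injective τ (Fin.ext (hi.trans (by fin_cases τ <;> rfl)))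
    rw [List.length_cons, List.replicate_succ, ← ih (by rw [hq]; omega)]

theorem eq_cons_replicate_zero_of_tmIndex_eq {τ : Fin 2} {i : Fin 4} {e : List (Fin 4)} {k : ℕ}
    (he : e.length = k + 1) (h : tmIndex τ e = tmChildRank τ i * 4 ^ k) :
    e = i :: List.replicate k 0 := by
  obtain ⟨j, q, rfl⟩ := List.exists_cons_of_length_eq_add_one he
  obtain rfl : q.length = k := by simpa using he
  obtain ⟨hj, hq⟩ := tmChildRank_eq_and_tmIndex_eq (t := 0) (by positivity) (h.trans (by ring))
  rw [tmChildRank_injective τ (Fin.ext hj)]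
  exact congrArg _ (eq_replicate_zero_of_tmIndex_eq_zero hq)

theorem eq_cons_replicate_two_of_tmIndex_add_one_eq {τ : Fin 2} {i : Fin 4} {e : List (Fin 4)}
    {k : ℕ} (he : e.length = k + 1) (h : tmIndex τ e + 1 = (tmChildRank τ i + 1) * 4 ^ k) :
    e = i :: List.replicate k 2 := by
  obtain ⟨j, q, rfl⟩ := List.exists_cons_of_length_eq_add_one he
  obtain rfl : q.length = k := by simpa using he
  have hpos : 0 < 4 ^ q.length := by positivity
  obtain ⟨hj, hq⟩ := tmChildRank_eq_and_tmIndex_eq (τ := τ) (i := j) (q := q)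
    (r := tmChildRank τ i) (t := 4 ^ q.length - 1) (by omega) (by rw [add_one_mul] at h; omega)
  rw [tmChildRank_injective τ (Fin.ext hj)]
  exact congrArg _ (eq_replicate_two_of_tmIndex_add_one_eq (by rw [hq]; omega))

theorem triCompBound_childDescendants_union_adjacent {y : Fin 3 → TMV}
    (hy : AffineIndependent ℝ y) {a b : Fin 4} {k : ℕ} {s e : List (Fin 4)}
    (hs : s ∈ childDescendants b k) (hse : triFaceNbr (tmVerts y s) (tmVerts y e)) :
    triCompBound y (childDescendants a k ∪ childDescendants b k ∪ {e}) 2 := by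
  rw [union_assoc]
  exact triCompBound_union (triFaceConnected_childDescendants hy a k)
    (triFaceConnected_union (triFaceConnected_childDescendants hy b k)
      (triFaceConnected_singleton y e) hs rfl hse)

/-- Let a contiguous TM segment consist of all level-`L` descendants of the consecutive
(in the TM child order of the type-`τ` root) level-1 children with ranks `u, …, w`,
together with exactly one additional level-`L` subtriangle `e` that immediately precedes
or immediately follows this union in the TM order.  Then the segment has at most two
face-connected components. -/
theorem tm_full_children_plus_one_at_most_two_components (x0 : Fin 3 → TMV)
    (hx0 : AffineIndependent ℝ x0) (L : ℕ) (hL : 1 ≤ L) (τ : Fin 2)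
    (u w : ℕ) (huw : u ≤ w) (hw : w ≤ 3)
    (e : List (Fin 4)) (he : e.length = L)
    (hidx : tmIndex τ e + 1 = u * 4 ^ (L - 1) ∨ tmIndex τ e = (w + 1) * 4 ^ (L - 1)) :
    triCompBound x0
      ({p : List (Fin 4) | p.length = L ∧ ∃ i : Fin 4, p.head? = some i ∧
          u ≤ (tmChildRank τ i : ℕ) ∧ (tmChildRank τ i : ℕ) ≤ w} ∪ {e}) 2 := by
  obtain ⟨k, rfl⟩ : ∃ k, L = k + 1 := ⟨L - 1, by omega⟩
  rw [Nat.add_sub_cancel] at hidx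
  rw [setOf_head_eq_biUnion]
  set I := {i : Fin 4 | u ≤ (tmChildRank τ i : ℕ) ∧ (tmChildRank τ i : ℕ) ≤ w} with hI
  have hD := fun i => triFaceConnected_childDescendants hx0 i k
  by_cases h3 : 3 ∈ I
  · exact triCompBound_union (triFaceConnected_biUnion_childDescendants hx0 hD h3)
      (triFaceConnected_singleton x0 e)
  by_cases huw' : u = w
  · refine triCompBound_union (triFaceConnected_biUnion_of_subsingleton ?_ hD)
      (triFaceConnected_singleton x0 e)
    exact fun i hi j hj => tmChildRank_injective τ (Fin.ext (by rw [hI] at hi hj; grind))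
  rw [hI, mem_ofPred_eq] at h3
  obtain rfl | rfl : τ = 0 ∨ τ = 1 := by omega
  -- the children are `T_0, T_1` and `e` is the first descendant of `T_3`
  · rw [show (tmChildRank 0 3 : ℕ) = 2 from rfl] at h3
    obtain ⟨rfl, rfl⟩ : u = 0 ∧ w = 1 := by omega
    obtain rfl := eq_cons_replicate_zero_of_tmIndex_eq (i := 3) he (hidx.resolve_left (by omega))
    rw [show I = {0, 1} by ext i; fin_cases i <;> simp [hI, tmChildRank], biUnion_pair]
    exact triCompBound_childDescendants_union_adjacent hx0 (s := 1 :: List.replicate k 0)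
      ⟨by simp, rfl⟩ (triFaceNbr_tmVerts_corner hx0 (v := 1) (w := 0) (w' := 0) rfl k)
  -- the children are `T_1, T_2` and `e` is the last descendant of `T_3`
  · rw [show (tmChildRank 1 3 : ℕ) = 1 from rfl] at h3
    obtain ⟨rfl, rfl⟩ : u = 2 ∧ w = 3 := by omega
    have hlt := tmIndex_lt 1 e
    rw [he, pow_succ] at hlt
    obtain rfl := eq_cons_replicate_two_of_tmIndex_add_one_eq (i := 3) he
      (hidx.resolve_right (by omega))
    rw [show I = {2, 1} by ext i; fin_cases i <;> simp [hI, tmChildRank], biUnion_pair]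
    exact triCompBound_childDescendants_union_adjacent hx0 (s := 1 :: List.replicate k 2)
      ⟨by simp, rfl⟩ (triFaceNbr_tmVerts_corner hx0 (v := 1) (w := 2) (w' := 2) rfl k)
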